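/- Let D be the shifted derangement sequence defined by D_0 = 0, D_1 = 1, and D_{n+2} = (n+2) * D_{n+1} + (n+2) * D_n. Then for every rational number t and every natural number n ≥ 1, 1 + the sum over k from 1 to n of (t^{k-1} / (k+1)!) * ((k+1) * D_{k-1} + (t-1) * D_{k+1}) equals (t^n / (n+1)!) * D_{n+1}. -/

import Mathlib

/-!
With `a k = t ^ k / (k + 1)! * D (k + 1)`, the `k`-th summand is `a k - a (k - 1)`: after clearing
`t ^ (k - 1) / (k + 1)!` this is exactly the recurrence `D (k + 1) = (k + 1) * (D k + D (k - 1))`.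
So the sum telescopes to `a n - a 0`, and `a 0 = D 1 = 1` absorbs the leading `1`.
-/

def shiftedDerangement : ℕ → ℕ
  | 0 => 0
  | 1 => 1
  | n + 2 => (n + 2) * shiftedDerangement (n + 1) + (n + 2) * shiftedDerangement n

theorem shiftedDerangement_add_two_cast {R : Type*} [CommSemiring R] (n : ℕ) :
    (shiftedDerangement (n + 2) : R) =
      (n + 2) * (shiftedDerangement (n + 1) + shiftedDerangement n) := by
  rw [shiftedDerangement]
  push_cast
  ring

theorem sury_summand_eq_sub {K : Type*} [Field K] [CharZero K] (t : K) (k : ℕ) :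
    t ^ k / ((k + 2).factorial : K) *
        ((k + 2) * (shiftedDerangement k : K) + (t - 1) * shiftedDerangement (k + 2)) =
      t ^ (k + 1) / ((k + 2).factorial : K) * shiftedDerangement (k + 2) -
        t ^ k / ((k + 1).factorial : K) * shiftedDerangement (k + 1) := by
  have hk : (k : K) + 1 + 1 ≠ 0 := by exact_mod_cast (k + 1).succ_ne_zero
  have hfac : ((k + 1).factorial : K) ≠ 0 := by exact_mod_cast (k + 1).factorial_ne_zero
  rw [Nat.factorial_succ (k + 1), Nat.cast_mul, shiftedDerangement_add_two_cast]
  push_cast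
  field_simp
  ring

theorem derangement_sury_general (t : ℚ) (n : ℕ) :
    1 + ∑ k ∈ Finset.Icc 1 n,
        (t ^ (k - 1) / ((k + 1).factorial : ℚ)) *
          ((k + 1) * (shiftedDerangement (k - 1) : ℚ) +
            (t - 1) * (shiftedDerangement (k + 1) : ℚ)) =
      (t ^ n / ((n + 1).factorial : ℚ)) * (shiftedDerangement (n + 1) : ℚ) := by
  set a : ℕ → ℚ := fun k ↦ t ^ k / ((k + 1).factorial : ℚ) * shiftedDerangement (k + 1)
  have ha0 : a 0 = 1 := by simp [a, shiftedDerangement]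
  rw [← Finset.Ico_add_one_right_eq_Icc, Finset.sum_Ico_eq_sum_range, add_tsub_cancel_right]
  calc _ = a 0 + ∑ k ∈ Finset.range n, (a (k + 1) - a k) := by
          refine congrArg₂ _ ha0.symm (Finset.sum_congr rfl fun k _ ↦ ?_)
          rw [add_comm 1 k, add_tsub_cancel_right, ← sury_summand_eq_sub]
          push_cast
          ring
    _ = a n := by rw [Finset.sum_range_sub]; ring

theorem derangement_sury (t : ℚ) (n : ℕ) (hn : 1 ≤ n) :
    1 + ∑ k ∈ Finset.Icc 1 n,
        (t ^ (k - 1) / ((k + 1).factorial : ℚ)) *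
          ((k + 1) * (shiftedDerangement (k - 1) : ℚ) +
            (t - 1) * (shiftedDerangement (k + 1) : ℚ)) =
      (t ^ n / ((n + 1).factorial : ℚ)) * (shiftedDerangement (n + 1) : ℚ) :=
  derangement_sury_general t n
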